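/- Pinsker's inequality for trees: For two leaf distributions P_L and P_{L'} on the same finite rooted tree with full support, D(P_L ‖ P_{L'})/E[w(L)] ≥ (1/(2 ln 2)) · Σ_{j∈B} P_B(j) · d(P_{S_j}, P_{S'_j})², where d is total variational distance d(P,Q) = Σ_a |P(a) - Q(a)| and P_B(j) = Q_j/E[w(L)]. -/

import Mathlib

/-!
At a branching node, the divergence of the leaf distributions below it splits (grouping rule)
into the divergence of the node probabilities plus the node probability times the divergence of
the two branching distributions. Unfolding this recursively from the root, whose node
probabilities are both `1`, writes `D(P_L ‖ P_{L'})` as `Σ_j Q_j D(P_{S_j} ‖ P_{S'_j})`, and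
Pinsker's inequality bounds each summand below by `Q_j d(P_{S_j}, P_{S'_j})² / (2 ln 2)`.
Pinsker's inequality itself follows from the pointwise bound
`x log x - x + 1 ≥ 3 (x - 1)² / (2 (x + 2))` and the Cauchy–Schwarz inequality.
-/

/-- A finite rooted tree with data of type `α` at the leaves. -/
inductive PTree (α : Type) : Type where
  | leaf (a : α) : PTree α
  | node (n : ℕ) (children : Fin n → PTree α) : PTree α

namespace PTree

/-- Node probability `Q_j`: sum of the probabilities of the leaves below the node. -/
def Q {α : Type} (pr : α → ℝ) : PTree α → ℝ
  | .leaf a => pr a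
  | .node n c => ∑ k : Fin n, Q pr (c k)

/-- All leaf probabilities are positive and every branching node has at least one
successor (so all node probabilities `Q_j` are positive). -/
def pos {α : Type} (pr : α → ℝ) : PTree α → Prop
  | .leaf a => 0 < pr a
  | .node n c => 0 < n ∧ ∀ k : Fin n, pos pr (c k)

/-- Expected value `E[f(L)]` over the leaves; nodes are identified by their
address (list of child indices from the root). -/
def leafExp {α : Type} (pr : α → ℝ) (f : List ℕ → ℝ) : PTree α → List ℕ → ℝ
  | .leaf a, addr => pr a * f addr
  | .node n c, addr => ∑ k : Fin n, leafExp pr f (c k) (addr ++ [k.val])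

/-- Informational divergence of the leaf distributions:
`D(P_L ‖ P_{L'}) = Σ_i P_L(i) log₂ (P_L(i)/P_{L'}(i))`. -/
noncomputable def leafDiv {α : Type} (p q : α → ℝ) : PTree α → ℝ
  | .leaf a => p a * Real.logb 2 (p a / q a)
  | .node n c => ∑ k : Fin n, leafDiv p q (c k)

/-- Variational distance `d(P_{S_j}, P_{S'_j})` between the two branching
distributions at a branching node with children `c` and node probabilities. -/
noncomputable def branchTV {α : Type} (p q : α → ℝ) (n : ℕ) (c : Fin n → PTree α) : ℝ :=
  ∑ k : Fin n, |Q p (c k) / Q p (.node n c) - Q q (c k) / Q q (.node n c)|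

/-- `Σ_{j∈B} P_B(j) · d(P_{S_j}, P_{S'_j})²` with `P_B(j) = Q_j / W`. -/
noncomputable def branchTVsqNorm {α : Type} (p q : α → ℝ) (W : ℝ) : PTree α → ℝ
  | .leaf _ => 0
  | .node n c =>
      (Q p (.node n c) / W) * (branchTV p q n c) ^ 2
      + ∑ k : Fin n, branchTVsqNorm p q W (c k)

end PTree

open Real Finset InformationTheory

open Set in
lemma le_apply_of_hasDerivAt_of_sign {f f' : ℝ → ℝ} {a c x : ℝ} (hc : a < c) (hx : a < x)
    (hf : ∀ y, a < y → HasDerivAt f (f' y) y)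
    (hleft : ∀ y, a < y → y < c → f' y ≤ 0) (hright : ∀ y, c < y → 0 ≤ f' y) :
    f c ≤ f x := by
  have hcont : ∀ u v, a < u → ContinuousOn f (Icc u v) := fun u v hu y hy =>
    (hf y (hu.trans_le hy.1)).continuousAt.continuousWithinAt
  have hderiv : ∀ u v, a < u → ∀ y ∈ interior (Icc u v),
      HasDerivWithinAt f (f' y) (interior (Icc u v)) y := fun u v hu y hy => by
    rw [interior_Icc] at hy
    exact (hf y (hu.trans hy.1)).hasDerivWithinAt
  rcases le_total c x with hcx | hxc
  · refine monotoneOn_of_hasDerivWithinAt_nonneg (convex_Icc c x) (hcont c x hc)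
      (hderiv c x hc) (fun y hy => ?_) (left_mem_Icc.2 hcx) (right_mem_Icc.2 hcx) hcx
    rw [interior_Icc] at hy
    exact hright y hy.1
  · refine antitoneOn_of_hasDerivWithinAt_nonpos (convex_Icc x c) (hcont x c hx)
      (hderiv x c hx) (fun y hy => ?_) (left_mem_Icc.2 hxc) (right_mem_Icc.2 hxc) hxc
    rw [interior_Icc] at hy
    exact hleft y (hx.trans hy.1) hy.2

lemma hasDerivAt_log_sub_div {x : ℝ} (hx : 0 < x) :
    HasDerivAt (fun y => log y - 3 * (y - 1) * (y + 5) / (2 * (y + 2) ^ 2))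
      ((x - 1) ^ 2 * (x + 8) / (x * (x + 2) ^ 3)) x := by
  have hnum : HasDerivAt (fun y : ℝ => 3 * (y - 1) * (y + 5)) (6 * x + 12) x :=
    ((((hasDerivAt_id' x).sub_const 1).const_mul 3).mul
      ((hasDerivAt_id' x).add_const 5)).congr_deriv (by ring)
  have hden : HasDerivAt (fun y : ℝ => 2 * (y + 2) ^ 2) (4 * (x + 2)) x :=
    ((((hasDerivAt_id' x).add_const 2).pow 2).const_mul 2).congr_deriv (by simp; ring)
  refine ((hasDerivAt_log hx.ne').sub (hnum.div hden (by positivity))).congr_deriv ?_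
  field_simp
  ring

lemma hasDerivAt_klFun_sub {x : ℝ} (hx : 0 < x) :
    HasDerivAt (fun y => klFun y - 3 * (y - 1) ^ 2 / (2 * (y + 2)))
      (log x - 3 * (x - 1) * (x + 5) / (2 * (x + 2) ^ 2)) x := by
  have hnum : HasDerivAt (fun y : ℝ => 3 * (y - 1) ^ 2) (6 * (x - 1)) x :=
    ((((hasDerivAt_id' x).sub_const 1).pow 2).const_mul 3).congr_deriv (by simp; ring)
  have hden : HasDerivAt (fun y : ℝ => 2 * (y + 2)) 2 x :=
    (((hasDerivAt_id' x).add_const 2).const_mul 2).congr_deriv (by ring)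
  refine ((hasDerivAt_klFun hx.ne').sub (hnum.div hden (by positivity))).congr_deriv ?_
  field_simp
  ring

open Set in
lemma sq_sub_one_div_le_klFun {x : ℝ} (hx : 0 < x) :
    3 * (x - 1) ^ 2 / (2 * (x + 2)) ≤ klFun x := by
  set g : ℝ → ℝ := fun y => log y - 3 * (y - 1) * (y + 5) / (2 * (y + 2) ^ 2)
  have hg_mono : MonotoneOn g (Ioi 0) := by
    refine monotoneOn_of_hasDerivWithinAt_nonneg
      (f' := fun y => (y - 1) ^ 2 * (y + 8) / (y * (y + 2) ^ 3)) (convex_Ioi 0)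
      (fun y hy => (hasDerivAt_log_sub_div hy).continuousAt.continuousWithinAt)
      (fun y hy => ?_) (fun y hy => ?_) <;> rw [interior_Ioi] at hy
    · exact (hasDerivAt_log_sub_div hy).hasDerivWithinAt
    · have : (0 : ℝ) < y := hy
      positivity
  have hg_one : g 1 = 0 := by simp [g]
  have key := le_apply_of_hasDerivAt_of_sign one_pos hx (fun y hy => hasDerivAt_klFun_sub hy)
    (fun y hy hy1 => hg_one ▸ hg_mono hy (mem_Ioi.2 one_pos) hy1.le)
    (fun y hy1 => hg_one ▸ hg_mono (mem_Ioi.2 one_pos) (mem_Ioi.2 (one_pos.trans hy1)) hy1.le)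
  simpa [klFun_one] using key

lemma sub_add_sq_div_le_mul_log {r t : ℝ} (hr : 0 < r) (ht : 0 < t) :
    r - t + 3 * (r - t) ^ 2 / (2 * (r + 2 * t)) ≤ r * log (r / t) := by
  have h := mul_le_mul_of_nonneg_left (sq_sub_one_div_le_klFun (div_pos hr ht)) ht.le
  have hsq : t * (3 * (r / t - 1) ^ 2 / (2 * (r / t + 2))) =
      3 * (r - t) ^ 2 / (2 * (r + 2 * t)) := by
    field_simp
  have hkl : t * klFun (r / t) = r * log (r / t) - r + t := by
    rw [klFun_apply]
    field_simp
    ring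
  linarith

theorem sq_sum_abs_sub_div_two_le_sum_mul_log {ι : Type*} (s : Finset ι) {r t : ι → ℝ}
    (hr : ∀ i ∈ s, 0 < r i) (ht : ∀ i ∈ s, 0 < t i)
    (hr1 : ∑ i ∈ s, r i = 1) (ht1 : ∑ i ∈ s, t i = 1) :
    (∑ i ∈ s, |r i - t i|) ^ 2 / 2 ≤ ∑ i ∈ s, r i * log (r i / t i) := by
  have hCS := sq_sum_div_le_sum_sq_div s (fun i => |r i - t i|)
    (g := fun i => r i + 2 * t i) fun i hi => by linarith [hr i hi, ht i hi]
  have hsum3 : ∑ i ∈ s, (r i + 2 * t i) = 3 := by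
    rw [sum_add_distrib, ← mul_sum, hr1, ht1]; norm_num
  have hsum0 : ∑ i ∈ s, (r i - t i) = 0 := by
    rw [sum_sub_distrib, hr1, ht1, sub_self]
  have hpointwise := sum_le_sum fun i hi => sub_add_sq_div_le_mul_log (hr i hi) (ht i hi)
  simp only [sq_abs, hsum3] at hCS
  rw [sum_add_distrib, hsum0, zero_add] at hpointwise
  calc (∑ i ∈ s, |r i - t i|) ^ 2 / 2
      ≤ 3 / 2 * ∑ i ∈ s, (r i - t i) ^ 2 / (r i + 2 * t i) := by linarith
    _ = ∑ i ∈ s, 3 * (r i - t i) ^ 2 / (2 * (r i + 2 * t i)) := by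
      rw [mul_sum]
      exact sum_congr rfl fun i _ => by field_simp
    _ ≤ _ := hpointwise

theorem sq_sum_abs_sub_div_le_sum_mul_logb {ι : Type*} (s : Finset ι) {r t : ι → ℝ}
    (hr : ∀ i ∈ s, 0 < r i) (ht : ∀ i ∈ s, 0 < t i)
    (hr1 : ∑ i ∈ s, r i = 1) (ht1 : ∑ i ∈ s, t i = 1) :
    (∑ i ∈ s, |r i - t i|) ^ 2 / (2 * log 2) ≤ ∑ i ∈ s, r i * logb 2 (r i / t i) := by
  simp only [logb, ← mul_div_assoc, ← sum_div, ← div_div]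
  exact div_le_div_of_nonneg_right
    (sq_sum_abs_sub_div_two_le_sum_mul_log s hr ht hr1 ht1) (log_nonneg one_le_two)

theorem sum_mul_logb_div_eq {ι : Type*} (s : Finset ι) {a b : ι → ℝ}
    (ha : ∀ i ∈ s, 0 < a i) (hb : ∀ i ∈ s, 0 < b i) :
    ∑ i ∈ s, a i * logb 2 (a i / b i) =
      (∑ i ∈ s, a i) * logb 2 ((∑ i ∈ s, a i) / ∑ i ∈ s, b i) +
        (∑ i ∈ s, a i) * ∑ i ∈ s, a i / (∑ i ∈ s, a i) *
          logb 2 ((a i / ∑ i ∈ s, a i) / (b i / ∑ i ∈ s, b i)) := by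
  rw [mul_sum, sum_mul, ← sum_add_distrib]
  refine sum_congr rfl fun i hi => ?_
  have hA : 0 < ∑ i ∈ s, a i := (ha i hi).trans_le (single_le_sum (fun j hj => (ha j hj).le) hi)
  have hB : 0 < ∑ i ∈ s, b i := (hb i hi).trans_le (single_le_sum (fun j hj => (hb j hj).le) hi)
  have hsplit : a i / b i = (a i / ∑ i ∈ s, a i) / (b i / ∑ i ∈ s, b i) *
      ((∑ i ∈ s, a i) / ∑ i ∈ s, b i) := by
    field_simp
  have hai := ha i hi
  have hbi := hb i hi
  rw [hsplit, logb_mul (by positivity) (by positivity)]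
  field_simp
  ring

namespace PTree

variable {α : Type} (p q : α → ℝ)

lemma Q_pos {pr : α → ℝ} : ∀ {t : PTree α}, pos pr t → 0 < Q pr t
  | .leaf _, h => h
  | .node _ _, h => sum_pos (fun k _ => Q_pos (h.2 k)) ⟨⟨0, h.1⟩, mem_univ _⟩

lemma branchTVsqNorm_eq_div (W : ℝ) :
    ∀ t : PTree α, branchTVsqNorm p q W t = branchTVsqNorm p q 1 t / W
  | .leaf _ => by rw [branchTVsqNorm, branchTVsqNorm, zero_div]
  | .node n c => by
      rw [branchTVsqNorm, branchTVsqNorm, sum_congr rfl fun k _ => branchTVsqNorm_eq_div W (c k),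
        ← sum_div, div_one, div_mul_eq_mul_div, ← add_div]

lemma Q_mul_logb_add_le_leafDiv : ∀ {t : PTree α}, pos p t → pos q t →
    Q p t * logb 2 (Q p t / Q q t) + branchTVsqNorm p q 1 t / (2 * log 2) ≤ leafDiv p q t
  | .leaf _, _, _ => by simp [Q, branchTVsqNorm, leafDiv]
  | .node n c, hp, hq => by
      have hA : 0 < Q p (node n c) := Q_pos hp
      have hB : 0 < Q q (node n c) := Q_pos hq
      have hpk : ∀ k ∈ univ, 0 < Q p (c k) := fun k _ => Q_pos (hp.2 k)
      have hqk : ∀ k ∈ univ, 0 < Q q (c k) := fun k _ => Q_pos (hq.2 k)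
      have hgroup := sum_mul_logb_div_eq univ hpk hqk
      have hpinsker := sq_sum_abs_sub_div_le_sum_mul_logb univ
        (fun k hk => div_pos (hpk k hk) hA) (fun k hk => div_pos (hqk k hk) hB)
        (by rw [← sum_div]; exact div_self hA.ne') (by rw [← sum_div]; exact div_self hB.ne')
      have hchildren := sum_le_sum fun k (_ : k ∈ univ) =>
        Q_mul_logb_add_le_leafDiv (hp.2 k) (hq.2 k)
      rw [sum_add_distrib, hgroup, ← sum_div, ← Q, ← Q] at hchildren
      have hweighted := mul_le_mul_of_nonneg_left hpinsker hA.le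
      rw [leafDiv, branchTVsqNorm, branchTV, div_one, add_div, mul_div_assoc]
      linarith

/-- Pinsker's inequality for trees:
`D(P_L ‖ P_{L'})/E[w(L)] ≥ (1/(2 ln 2)) Σ_{j∈B} P_B(j) d(P_{S_j}, P_{S'_j})²`. -/
theorem pinsker_tree {α : Type} (p q : α → ℝ) (t : PTree α)
    (hp : pos p t) (hq : pos q t) (hQp : Q p t = 1) (hQq : Q q t = 1)
    (hW : 0 < leafExp p (fun addr => (addr.length : ℝ)) t []) :
    leafDiv p q t / leafExp p (fun addr => (addr.length : ℝ)) t []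
      ≥ (1 / (2 * Real.log 2)) *
          branchTVsqNorm p q (leafExp p (fun addr => (addr.length : ℝ)) t []) t := by
  rw [ge_iff_le, branchTVsqNorm_eq_div, ← mul_div_assoc, one_div_mul_eq_div]
  refine div_le_div_of_nonneg_right ?_ hW.le
  simpa [hQp, hQq] using Q_mul_logb_add_le_leafDiv p q hp hq

end PTree
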